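/- arXiv:1211.3689 — 2 statements merged into one kernel-verified Lean document; each statement's English description precedes it below -/
import Mathlib

section
/- For every finite simple graph G on n ≥ 1 vertices and every natural number k ≥ 1, ⌈n/(n − D_1(G))⌉ ≤ φ^(k)(G) ≤ ⌈n/(n − Δ(G))⌉, where Δ(G) is the maximum degree of G and D_1(G) is the average degree of G. -/
open Finset

/-- `W` is a *small set* in `G`: every vertex in `W` has degree at most `n - |W|`. -/
def SimpleGraph.IsSmallSet {V : Type*} [Fintype V] (G : SimpleGraph V)
    [DecidableRel G.Adj] (W : Finset V) : Prop :=
  ∀ v ∈ W, G.degree v ≤ Fintype.card V - W.card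

/-- `W` is a *δₖ-small set* in `G`: `∑_{v ∈ W} d(v)^k ≤ |W| (n - |W|)^k`. -/
def SimpleGraph.IsDeltaSmallSet {V : Type*} [Fintype V] (G : SimpleGraph V)
    [DecidableRel G.Adj] (k : ℕ) (W : Finset V) : Prop :=
  ∑ v ∈ W, (G.degree v) ^ k ≤ W.card * (Fintype.card V - W.card) ^ k

/-- `φ(G)`: least `r` such that `V(G)` decomposes into `r` small sets. -/
noncomputable def SimpleGraph.phi {V : Type*} [Fintype V] (G : SimpleGraph V)
    [DecidableRel G.Adj] : ℕ :=
  sInf {r | ∃ f : V → Fin r, ∀ i, G.IsSmallSet (Finset.univ.filter fun v => f v = i)}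

/-- `φ⁽ᵏ⁾(G)`: least `r` such that `V(G)` decomposes into `r` δₖ-small sets. -/
noncomputable def SimpleGraph.phiDelta {V : Type*} [Fintype V] (G : SimpleGraph V)
    [DecidableRel G.Adj] (k : ℕ) : ℕ :=
  sInf {r | ∃ f : V → Fin r, ∀ i, G.IsDeltaSmallSet k (Finset.univ.filter fun v => f v = i)}

/-- `D_k(G)`: the `k`-th power mean of the degrees of `G`. -/
noncomputable def SimpleGraph.degPowerMean {V : Type*} [Fintype V] (G : SimpleGraph V)
    [DecidableRel G.Adj] (k : ℕ) : ℝ :=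
  ((∑ v, (G.degree v : ℝ) ^ k) / (Fintype.card V : ℝ)) ^ ((1 : ℝ) / k)

/-- `α⁽ᵏ⁾(G)`: the maximum size of a δₖ-small set of `G`. -/
noncomputable def SimpleGraph.alphaDelta {V : Type*} [Fintype V] (G : SimpleGraph V)
    [DecidableRel G.Adj] (k : ℕ) : ℕ :=
  sSup {m | ∃ W : Finset V, G.IsDeltaSmallSet k W ∧ W.card = m}

/-- `S(G)`: the maximum size of a small set of `G`. -/
noncomputable def SimpleGraph.maxSmallSetSize {V : Type*} [Fintype V] (G : SimpleGraph V)
    [DecidableRel G.Adj] : ℕ :=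
  sSup {m | ∃ W : Finset V, G.IsSmallSet W ∧ W.card = m}

/-- `α(G)`: the independence number of `G`. -/
noncomputable def SimpleGraph.indepNum' {V : Type*} [Fintype V] (G : SimpleGraph V) : ℕ :=
  sSup {m | ∃ W : Finset V, (∀ v ∈ W, ∀ w ∈ W, ¬ G.Adj v w) ∧ W.card = m}

/-!
Upper bound: cut an enumeration of `V` into `⌈n / (n - Δ)⌉` blocks of at most `n - Δ` consecutive
vertices; in a block `W` every degree is at most `Δ ≤ n - |W|`, so `W` is δₖ-small.

Lower bound: by the power mean inequality a δₖ-small set `W` satisfies `∑_{v ∈ W} d(v) ≤ |W| (n - |W|)`.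
Summing over the `r` parts of sizes `c_i` and using Cauchy–Schwarz `n² ≤ r ∑ c_i²` gives
`n D₁ = ∑ d(v) ≤ n² - ∑ c_i² ≤ n² (1 - 1/r)`, i.e. `n / (n - D₁) ≤ r`.
-/

theorem Finset.sum_le_card_mul_of_sum_pow_le {ι α : Type*} [CommSemiring α] [LinearOrder α]
    [IsStrictOrderedRing α] [ExistsAddOfLE α] {s : Finset ι} {d : ι → α} {M : α} {k : ℕ}
    (hk : k ≠ 0) (hd : ∀ i ∈ s, 0 ≤ d i) (hM : 0 ≤ M) (h : ∑ i ∈ s, d i ^ k ≤ #s * M ^ k) :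
    ∑ i ∈ s, d i ≤ #s * M := by
  obtain ⟨j, rfl⟩ := Nat.exists_eq_succ_of_ne_zero hk
  refine (pow_le_pow_iff_left₀ (sum_nonneg hd) (mul_nonneg (Nat.cast_nonneg _) hM) hk).mp ?_
  calc (∑ i ∈ s, d i) ^ (j + 1) ≤ (#s : α) ^ j * ∑ i ∈ s, d i ^ (j + 1) :=
        pow_sum_le_card_mul_sum_pow hd j
    _ ≤ (#s : α) ^ j * (#s * M ^ (j + 1)) := by gcongr
    _ = (#s * M) ^ (j + 1) := by ring

theorem Finset.card_mul_sum_mul_sub_le {ι : Type*} (s : Finset ι) (c : ι → ℝ) :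
    #s * ∑ i ∈ s, c i * (∑ j ∈ s, c j - c i) ≤ (#s - 1) * (∑ i ∈ s, c i) ^ 2 := by
  have := sq_sum_le_card_mul_sum_sq (s := s) (f := c)
  simp only [mul_sub, sum_sub_distrib, ← sum_mul, ← sq] at this ⊢
  linarith

theorem Fintype.exists_fin_fibers_card_le {V : Type*} [Fintype V] {r m : ℕ}
    (h : Fintype.card V ≤ r * m) : ∃ f : V → Fin r, ∀ i, #{v | f v = i} ≤ m := by
  let e := Fintype.equivFin V
  have he (v : V) : (e v : ℕ) < m * r := (e v).isLt.trans_le (h.trans_eq (mul_comm r m))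
  refine ⟨fun v => ⟨e v / m, Nat.div_lt_of_lt_mul (he v)⟩, fun i => ?_⟩
  calc #{v | (⟨e v / m, _⟩ : Fin r) = i}
      ≤ #(Ico (i * m) (i * m + m)) := by
        refine card_le_card_of_injOn (fun v => (e v : ℕ)) (fun v hv => ?_)
          (fun v _ w _ hvw => e.injective (Fin.val_injective hvw))
        have hm : 0 < m := Nat.pos_of_mul_pos_right ((Nat.zero_le _).trans_lt (he v))
        simp only [coe_filter, mem_univ, true_and, Set.mem_ofPred_eq, Fin.ext_iff] at hv
        have := (Nat.div_eq_iff hm).mp hv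
        simp only [coe_Ico, Set.mem_Ico]
        omega
    _ = m := by simp

namespace SimpleGraph

variable {V : Type*} [Fintype V] (G : SimpleGraph V) [DecidableRel G.Adj]

theorem degPowerMean_one :
    G.degPowerMean 1 = (∑ v, (G.degree v : ℝ)) / Fintype.card V := by
  simp [degPowerMean]

theorem isSmallSet_of_card_le {W : Finset V} (h : #W ≤ Fintype.card V - G.maxDegree) :
    G.IsSmallSet W := fun v hv => by
  have := G.degree_le_maxDegree v
  have := @maxDegree_lt_card_verts _ G _ _ ⟨v⟩
  omega

variable {G}

theorem IsSmallSet.isDeltaSmallSet {W : Finset V} (h : G.IsSmallSet W) (k : ℕ) :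
    G.IsDeltaSmallSet k W :=
  (sum_le_sum fun v hv => Nat.pow_le_pow_left (h v hv) k).trans_eq (by simp)

theorem IsDeltaSmallSet.one {k : ℕ} {W : Finset V} (hk : k ≠ 0) (h : G.IsDeltaSmallSet k W) :
    G.IsDeltaSmallSet 1 W := by
  simpa [IsDeltaSmallSet] using sum_le_card_mul_of_sum_pow_le hk (by simp) (by simp) h

variable (G)

theorem exists_partition_isDeltaSmallSet (k : ℕ) :
    ∃ f : V → Fin ⌈(Fintype.card V : ℝ) / (Fintype.card V - G.maxDegree)⌉₊,
      ∀ i, G.IsDeltaSmallSet k {v | f v = i} := by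
  suffices Fintype.card V ≤
      ⌈(Fintype.card V : ℝ) / (Fintype.card V - G.maxDegree)⌉₊ * (Fintype.card V - G.maxDegree) by
    obtain ⟨f, hf⟩ := Fintype.exists_fin_fibers_card_le this
    exact ⟨f, fun i => (G.isSmallSet_of_card_le (hf i)).isDeltaSmallSet k⟩
  rcases isEmpty_or_nonempty V with hV | hV
  · simp
  have hΔ := G.maxDegree_lt_card_verts
  have hm : (0 : ℝ) < Fintype.card V - G.maxDegree := by
    rw [sub_pos]
    exact_mod_cast hΔ
  have := Nat.le_ceil ((Fintype.card V : ℝ) / (Fintype.card V - G.maxDegree))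
  rw [div_le_iff₀ hm] at this
  rwa [← Nat.cast_le (α := ℝ), Nat.cast_mul, Nat.cast_sub hΔ.le]

theorem card_mul_sum_degree_le {r : ℕ} (f : V → Fin r)
    (hf : ∀ i, G.IsDeltaSmallSet 1 {v | f v = i}) :
    r * ∑ v, (G.degree v : ℝ) ≤ (r - 1) * (Fintype.card V : ℝ) ^ 2 := by
  let c (i : Fin r) : ℝ := #{v | f v = i}
  have hc : ∑ i, c i = Fintype.card V := by
    have := card_eq_sum_card_fiberwise (f := f) (s := univ) (t := univ) (by simp)
    rw [card_univ] at this
    simp only [c]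
    exact_mod_cast this.symm
  have hdeg : ∑ v, (G.degree v : ℝ) ≤ ∑ i, c i * (∑ j, c j - c i) := by
    rw [← sum_fiberwise univ f, hc]
    gcongr with i
    have := hf i
    simp only [IsDeltaSmallSet, pow_one] at this
    simp only [c, ← Nat.cast_sub (card_le_univ _)]
    exact_mod_cast this
  have := card_mul_sum_mul_sub_le univ c
  rw [card_univ, Fintype.card_fin, hc] at this
  rw [hc] at hdeg
  exact (mul_le_mul_of_nonneg_left hdeg r.cast_nonneg).trans this

end SimpleGraph

theorem Nat.ceil_div_sub_div_le {n S : ℝ} {r : ℕ} (hn : 0 ≤ n) (h : r * S ≤ (r - 1) * n ^ 2) :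
    ⌈n / (n - S / n)⌉₊ ≤ r := by
  rcases hn.eq_or_lt with rfl | hn
  · simp
  have hr : (0 : ℝ) < r := by
    rcases r.eq_zero_or_pos with rfl | hr
    · simp only [Nat.cast_zero, zero_mul, zero_sub, neg_one_mul, Left.nonneg_neg_iff] at h
      nlinarith
    · exact_mod_cast hr
  have hS : S < n ^ 2 := by nlinarith
  have hpos : 0 < n - S / n := by
    rw [sub_pos, div_lt_iff₀ hn]
    nlinarith
  rw [Nat.ceil_le, div_le_iff₀ hpos, mul_sub, mul_div_assoc', le_sub_iff_add_le, ← le_sub_iff_add_le',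
    div_le_iff₀ hn]
  nlinarith

theorem stmt_4_general {V : Type*} [Fintype V] (G : SimpleGraph V) [DecidableRel G.Adj]
    (k : ℕ) (hk : 1 ≤ k) :
    ⌈(Fintype.card V : ℝ) / ((Fintype.card V : ℝ) - G.degPowerMean 1)⌉₊ ≤ G.phiDelta k ∧
      G.phiDelta k ≤ ⌈(Fintype.card V : ℝ) / ((Fintype.card V : ℝ) - (G.maxDegree : ℝ))⌉₊ := by
  have hpart := G.exists_partition_isDeltaSmallSet k
  obtain ⟨f, hf⟩ : G.phiDelta k ∈ {r | ∃ f : V → Fin r, ∀ i, G.IsDeltaSmallSet k {v | f v = i}} :=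
    Nat.sInf_mem ⟨_, hpart⟩
  refine ⟨?_, Nat.sInf_le hpart⟩
  rw [G.degPowerMean_one]
  exact Nat.ceil_div_sub_div_le (Nat.cast_nonneg _)
    (G.card_mul_sum_degree_le f fun i => (hf i).one (by omega))

theorem stmt_4 {V : Type*} [Fintype V] (G : SimpleGraph V) [DecidableRel G.Adj]
    (hn : 1 ≤ Fintype.card V) (k : ℕ) (hk : 1 ≤ k) :
    ⌈(Fintype.card V : ℝ) / ((Fintype.card V : ℝ) - G.degPowerMean 1)⌉₊ ≤ G.phiDelta k ∧
      G.phiDelta k ≤ ⌈(Fintype.card V : ℝ) / ((Fintype.card V : ℝ) - (G.maxDegree : ℝ))⌉₊ :=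
  stmt_4_general G k hk
end

section
/- Let G be a finite simple graph on n ≥ 1 vertices. Then for every natural number k with 1 ≤ k ≤ φ(G), φ(G) ≥ n/(n − D_k(G)). -/
open Finset

/-- `α(G)`: the independence number of `G`. -/
noncomputable def SimpleGraph.indepNumAux {V : Type*} [Fintype V] (G : SimpleGraph V) : ℕ :=
  sSup {m | ∃ W : Finset V, (∀ v ∈ W, ∀ w ∈ W, ¬ G.Adj v w) ∧ W.card = m}

/-! Split `V(G)` into `r = φ(G)` small sets of sizes `c₁, …, c_r`. Then
`∑ d(v)^k ≤ ∑ cᵢ (n - cᵢ)^k`, and since `x ↦ x (n - x)^k` lies below its tangent at `n / r`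
whenever `k ≤ r`, the right-hand side is at most `n (n - n/r)^k` because `∑ cᵢ = n`.
Hence `D_k(G) ≤ n - n/r`, which rearranges to `r ≥ n / (n - D_k(G))`. -/

/-- The right-hand side is the tangent line of `a ↦ a (n - a)^k` at `t`. -/
theorem mul_sub_pow_le_tangent {k : ℕ} (hk : 1 ≤ k) {n t a : ℝ} (ht : 0 ≤ t)
    (hkt : k * t ≤ n) (ha : a ≤ n) :
    a * (n - a) ^ k ≤ t * (n - t) ^ k + (n - t) ^ (k - 1) * (n - (k + 1) * t) * (a - t) := by
  induction k, hk using Nat.le_induction with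
  | base => norm_num; nlinarith [sq_nonneg (a - t)]
  | succ m _ ih =>
    obtain ⟨j, rfl⟩ : ∃ j, m = j + 1 := ⟨m - 1, by omega⟩
    push_cast at hkt ih ⊢
    have step := mul_le_mul_of_nonneg_left (ih (by linarith)) (sub_nonneg.2 ha)
    have gap : 0 ≤ (n - t) ^ j * (n - (j + 2) * t) * (a - t) ^ 2 := by
      have : 0 ≤ n - t := by nlinarith
      have : 0 ≤ n - (j + 2) * t := by linarith
      positivity
    linear_combination step + gap

theorem sum_mul_sub_pow_le {ι : Type*} [Fintype ι] {k : ℕ} (hk : 1 ≤ k)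
    (hkι : k ≤ Fintype.card ι) {n : ℝ} (hn : 0 ≤ n) (a : ι → ℝ) (ha : ∀ i, a i ≤ n)
    (hsum : ∑ i, a i = n) :
    ∑ i, a i * (n - a i) ^ k ≤ n * (n - n / Fintype.card ι) ^ k := by
  set r : ℝ := (Fintype.card ι : ℝ)
  set t := n / r
  have hr : 0 < r := by simp only [r]; exact_mod_cast (by omega : 0 < Fintype.card ι)
  have hrt : r * t = n := mul_div_cancel₀ n hr.ne'
  have hkt : k * t ≤ n := by
    calc k * t ≤ r * t := by gcongr; simp only [r]; exact_mod_cast hkι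
      _ = n := hrt
  calc ∑ i, a i * (n - a i) ^ k
      ≤ ∑ i, (t * (n - t) ^ k + (n - t) ^ (k - 1) * (n - (k + 1) * t) * (a i - t)) :=
        sum_le_sum fun i _ => mul_sub_pow_le_tangent hk (by positivity) hkt (ha i)
    _ = r * t * (n - t) ^ k + (n - t) ^ (k - 1) * (n - (k + 1) * t) * (∑ i, a i - r * t) := by
        simp only [sum_add_distrib, ← mul_sum, sum_sub_distrib, sum_const, card_univ,
          nsmul_eq_mul, r]
        ring
    _ = n * (n - t) ^ k := by rw [hrt, hsum, sub_self, mul_zero, add_zero]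

namespace SimpleGraph

variable {V : Type*} [Fintype V] (G : SimpleGraph V) [DecidableRel G.Adj]

theorem IsSmallSet.sum_degree_pow_le {W : Finset V} (hW : G.IsSmallSet W) (k : ℕ) :
    ∑ v ∈ W, (G.degree v : ℝ) ^ k ≤ W.card * ((Fintype.card V : ℝ) - W.card) ^ k := by
  calc ∑ v ∈ W, (G.degree v : ℝ) ^ k ≤ ∑ _v ∈ W, ((Fintype.card V : ℝ) - W.card) ^ k := by
        refine sum_le_sum fun v hv => pow_le_pow_left₀ (Nat.cast_nonneg _) ?_ k
        rw [← Nat.cast_sub W.card_le_univ]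
        exact_mod_cast hW v hv
    _ = W.card * ((Fintype.card V : ℝ) - W.card) ^ k := by rw [sum_const, nsmul_eq_mul]

theorem degPowerMean_le_of_sum_le {k : ℕ} (hk : k ≠ 0) {x : ℝ} (hx : 0 ≤ x)
    (h : ∑ v, (G.degree v : ℝ) ^ k ≤ Fintype.card V * x ^ k) : G.degPowerMean k ≤ x := by
  have hmean : (∑ v, (G.degree v : ℝ) ^ k) / Fintype.card V ≤ x ^ k :=
    div_le_of_le_mul₀ (Nat.cast_nonneg _) (by positivity) (by linarith)
  calc G.degPowerMean k ≤ (x ^ k) ^ ((1 : ℝ) / k) :=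
        Real.rpow_le_rpow (by positivity) hmean (by positivity)
    _ = x := by
        rw [← Real.rpow_natCast, ← Real.rpow_mul hx, mul_one_div_cancel (by exact_mod_cast hk),
          Real.rpow_one]

theorem degPowerMean_le_of_smallSet_partition {r : ℕ} (f : V → Fin r)
    (hf : ∀ i, G.IsSmallSet (univ.filter fun v => f v = i)) {k : ℕ} (hk : 1 ≤ k) (hkr : k ≤ r) :
    G.degPowerMean k ≤ Fintype.card V - Fintype.card V / r := by
  set n : ℝ := (Fintype.card V : ℝ)
  set c : Fin r → ℝ := fun i => (univ.filter fun v => f v = i).card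
  have hcn : ∀ i, c i ≤ n := fun i => by simp only [c, n]; exact_mod_cast card_le_univ _
  have hsum : ∑ i, c i = n := by
    simp only [c, n]
    rw [← Nat.cast_sum, ← card_eq_sum_card_fiberwise (fun v _ => mem_univ (f v)), card_univ]
  have hnr : n / r ≤ n := div_le_self (Nat.cast_nonneg _) (by exact_mod_cast (by omega : 1 ≤ r))
  refine G.degPowerMean_le_of_sum_le (by omega) (sub_nonneg.2 hnr) ?_
  calc ∑ v, (G.degree v : ℝ) ^ k
      = ∑ i, ∑ v ∈ univ.filter fun v => f v = i, (G.degree v : ℝ) ^ k :=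
        (sum_fiberwise univ f _).symm
    _ ≤ ∑ i, c i * (n - c i) ^ k := sum_le_sum fun i _ => (hf i).sum_degree_pow_le G k
    _ ≤ n * (n - n / r) ^ k := by
        simpa using sum_mul_sub_pow_le hk (by simpa using hkr) (Nat.cast_nonneg _) c hcn hsum

theorem exists_smallSet_partition_phi :
    ∃ f : V → Fin G.phi, ∀ i, G.IsSmallSet (univ.filter fun v => f v = i) := by
  refine Nat.sInf_mem (s := {r | ∃ f : V → Fin r, ∀ i, G.IsSmallSet (univ.filter fun v => f v = i)})
    ⟨_, Fintype.equivFin V, fun i v hv => ?_⟩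
  have hsingleton : (univ.filter fun v => Fintype.equivFin V v = i).card ≤ 1 :=
    card_le_one.2 fun a ha b hb => (Fintype.equivFin V).injective <| by
      rw [(mem_filter.1 ha).2, (mem_filter.1 hb).2]
  have := G.degree_lt_card_verts v
  omega

end SimpleGraph

theorem stmt_12_general {V : Type*} [Fintype V] (G : SimpleGraph V) [DecidableRel G.Adj]
    (k : ℕ) (hk : 1 ≤ k) (hkphi : k ≤ G.phi) :
    (G.phi : ℝ) ≥
      (Fintype.card V : ℝ) / ((Fintype.card V : ℝ) - G.degPowerMean k) := by
  obtain ⟨f, hf⟩ := G.exists_smallSet_partition_phi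
  have hD := G.degPowerMean_le_of_smallSet_partition f hf hk hkphi
  have hr : (0 : ℝ) < G.phi := by exact_mod_cast (by omega : 0 < G.phi)
  have hnr : (0 : ℝ) ≤ Fintype.card V / G.phi := by positivity
  refine div_le_of_le_mul₀ (by linarith) hr.le ?_
  calc (Fintype.card V : ℝ) = G.phi * (Fintype.card V / G.phi) := (mul_div_cancel₀ _ hr.ne').symm
    _ ≤ G.phi * (Fintype.card V - G.degPowerMean k) := by gcongr; linarith

theorem stmt_12 {V : Type*} [Fintype V] (G : SimpleGraph V) [DecidableRel G.Adj]
    (hn : 1 ≤ Fintype.card V) (k : ℕ) (hk : 1 ≤ k) (hkphi : k ≤ G.phi) :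
    (G.phi : ℝ) ≥
      (Fintype.card V : ℝ) / ((Fintype.card V : ℝ) - G.degPowerMean k) :=
  stmt_12_general G k hk hkphi
end
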